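/- For every n ≥ 2, the number of standard puzzles of shape 2×n with support {A, R} = {(1,2,3,4), (3,2,4,1)} equals 2(n−1). -/

import Mathlib

/-- The rank (1-based) of entry `i` among the four entries of `q`. -/
def puzzleRank {N : ℕ} (q : Fin 4 → Fin N) (i : Fin 4) : ℕ :=
  (Finset.univ.filter (fun k => q k ≤ q i)).card

/-- The pattern (order-isomorphism type) of the `j`-th piece of a 2×n array `f`,
read bottom-left, bottom-right, top-right, top-left. Row `0` is the bottom row. -/
def piece {n : ℕ} (f : Fin 2 × Fin n → Fin (2 * n)) (j : ℕ) (hj : j + 1 < n) :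
    ℕ × ℕ × ℕ × ℕ :=
  let q : Fin 4 → Fin (2 * n) :=
    ![f (0, ⟨j, Nat.lt_of_succ_lt hj⟩), f (0, ⟨j + 1, hj⟩),
      f (1, ⟨j + 1, hj⟩), f (1, ⟨j, Nat.lt_of_succ_lt hj⟩)]
  (puzzleRank q 0, puzzleRank q 1, puzzleRank q 2, puzzleRank q 3)

/-- The number of standard puzzles of shape 2×n all of whose pieces lie in `P`. -/
noncomputable def puzzleCount (n : ℕ) (P : Set (ℕ × ℕ × ℕ × ℕ)) : ℕ :=
  Nat.card {f : (Fin 2 × Fin n) ≃ Fin (2 * n) //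
    ∀ j (hj : j + 1 < n), piece f j hj ∈ P}


/-!
The right column of a piece of type `A` or `R` is increasing, whereas the left column of an `R`
piece is decreasing; hence only the first piece can be `R`. The entries therefore increase along
the boundary path `b₁ < ⋯ < b_{n-1} < t_{n-1} < ⋯ < t₁` (bottom row `b`, top row `t`), which covers
every cell outside the first column; as these cells carry the remaining values in increasing
order, a puzzle is determined by its first column. If the first
piece is `A` the first column is `(b₀, t₀) = (0, 2n - 1)`; if it is `R` it is `(m, 0)` with
`2 ≤ m ≤ 2n - 2`, and each of these occurs. So `b₀` is an injective invariant whose values are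
`{0, …, 2n - 1} \ {1, 2n - 1}`.
-/

open Function Set

section Rank

variable {N : ℕ} (q : Fin 4 → Fin N)

lemma puzzleRank_le_puzzleRank {i j : Fin 4} (h : q i ≤ q j) :
    puzzleRank q i ≤ puzzleRank q j :=
  Finset.card_le_card fun _ hk => by
    simp only [Finset.mem_filter, Finset.mem_univ, true_and] at hk ⊢
    exact hk.trans h

lemma puzzleRank_lt_puzzleRank_iff {i j : Fin 4} :
    puzzleRank q i < puzzleRank q j ↔ q i < q j := by
  refine ⟨fun h => lt_of_not_ge fun h' => (puzzleRank_le_puzzleRank q h').not_gt h,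
    fun h => Finset.card_lt_card ?_⟩
  refine (Finset.ssubset_iff_of_subset fun _ hk => ?_).mpr ⟨j, by simp, by simpa using h⟩
  simp only [Finset.mem_filter, Finset.mem_univ, true_and] at hk ⊢
  exact hk.trans h.le

lemma one_le_puzzleRank (i : Fin 4) : 1 ≤ puzzleRank q i :=
  Finset.card_pos.mpr ⟨i, by simp⟩

lemma puzzleRank_le_four (i : Fin 4) : puzzleRank q i ≤ 4 :=
  (Finset.card_filter_le _ _).trans (by simp)

lemma puzzleRanks_eq_1234_iff :
    (puzzleRank q 0, puzzleRank q 1, puzzleRank q 2, puzzleRank q 3) = (1, 2, 3, 4) ↔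
      q 0 < q 1 ∧ q 1 < q 2 ∧ q 2 < q 3 := by
  simp only [Prod.mk.injEq, ← puzzleRank_lt_puzzleRank_iff q]
  have := one_le_puzzleRank q 0
  have := puzzleRank_le_four q 3
  omega

lemma puzzleRanks_eq_3241_iff :
    (puzzleRank q 0, puzzleRank q 1, puzzleRank q 2, puzzleRank q 3) = (3, 2, 4, 1) ↔
      q 3 < q 1 ∧ q 1 < q 0 ∧ q 0 < q 2 := by
  simp only [Prod.mk.injEq, ← puzzleRank_lt_puzzleRank_iff q]
  have := one_le_puzzleRank q 3
  have := puzzleRank_le_four q 2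
  omega

end Rank

lemma piece_mem_AR_iff {n : ℕ} (f : Fin 2 × Fin n → Fin (2 * n)) (j : ℕ) (hj : j + 1 < n) :
    piece f j hj ∈ ({(1, 2, 3, 4), (3, 2, 4, 1)} : Set (ℕ × ℕ × ℕ × ℕ)) ↔
      (f (0, ⟨j, by omega⟩) < f (0, ⟨j + 1, hj⟩) ∧ f (0, ⟨j + 1, hj⟩) < f (1, ⟨j + 1, hj⟩) ∧
          f (1, ⟨j + 1, hj⟩) < f (1, ⟨j, by omega⟩)) ∨
        (f (1, ⟨j, by omega⟩) < f (0, ⟨j + 1, hj⟩) ∧ f (0, ⟨j + 1, hj⟩) < f (0, ⟨j, by omega⟩) ∧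
          f (0, ⟨j, by omega⟩) < f (1, ⟨j + 1, hj⟩)) := by
  rw [piece, Set.mem_insert_iff, Set.mem_singleton_iff, puzzleRanks_eq_1234_iff,
    puzzleRanks_eq_3241_iff]
  rfl

lemma Fin.strictMono_of_lt_add_one {β : Type*} [Preorder β] {N : ℕ} {g : Fin N → β}
    (h : ∀ i (hi : i + 1 < N), g ⟨i, by omega⟩ < g ⟨i + 1, hi⟩) : StrictMono g := by
  cases N with
  | zero => exact fun i => i.elim0
  | succ N => exact Fin.strictMono_iff_lt_succ.mpr fun i => h i i.succ.isLt

lemma Equiv.eq_of_eqOn_compl_range {α β ι : Type*} [LinearOrder ι] [WellFoundedLT ι]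
    [LinearOrder β] {f g : α ≃ β} {c : ι → α} (hf : StrictMono (f ∘ c))
    (hg : StrictMono (g ∘ c)) (h : EqOn f g (range c)ᶜ) : f = g := by
  have hrange : range (f ∘ c) = range (g ∘ c) := by
    rw [range_comp, range_comp, ← compl_compl (range c), f.image_compl, g.image_compl,
      h.image_eq]
  have hc := (hf.range_inj hg).mp hrange
  ext p
  by_cases hp : p ∈ range c
  · obtain ⟨i, rfl⟩ := hp
    exact congrFun hc i
  · exact h hp

lemma Equiv.val_eq_zero_of_forall_le {α : Type*} {N : ℕ} (f : α ≃ Fin N) {a : α}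
    (h : ∀ p, f a ≤ f p) : (f a).val = 0 := by
  simpa [Fin.le_def] using h (f.symm ⟨0, Fin.pos (f a)⟩)

lemma Equiv.val_eq_sub_one_of_forall_ge {α : Type*} {N : ℕ} (f : α ≃ Fin N) {a : α}
    (h : ∀ p, f p ≤ f a) : (f a).val = N - 1 := by
  have := (f a).isLt
  have : N - 1 ≤ (f a).val := by simpa [Fin.le_def] using h (f.symm ⟨N - 1, by omega⟩)
  omega

def HasSupportAR {n : ℕ} (f : Fin 2 × Fin n → Fin (2 * n)) : Prop :=
  ∀ j (hj : j + 1 < n), piece f j hj ∈ ({(1, 2, 3, 4), (3, 2, 4, 1)} : Set (ℕ × ℕ × ℕ × ℕ))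

def chainCell (n : ℕ) (i : Fin (2 * n - 2)) : Fin 2 × Fin n :=
  if h : i.val + 1 < n then (0, ⟨i + 1, h⟩) else (1, ⟨2 * n - 2 - i, by omega⟩)

lemma range_chainCell (n : ℕ) : range (chainCell n) = {p | p.2.val ≠ 0} := by
  ext p
  constructor
  · rintro ⟨i, rfl⟩
    show (chainCell n i).2.val ≠ 0
    rw [chainCell]
    split_ifs <;> dsimp only <;> omega
  · obtain ⟨r, j⟩ := p
    intro (hj : j.val ≠ 0)
    fin_cases r
    · refine ⟨⟨j - 1, by omega⟩, ?_⟩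
      rw [chainCell, dif_pos (by dsimp only; omega)]
      exact Prod.ext rfl (Fin.ext (by dsimp only; omega))
    · refine ⟨⟨2 * n - 2 - j, by omega⟩, ?_⟩
      rw [chainCell, dif_neg (by dsimp only; omega)]
      exact Prod.ext rfl (Fin.ext (by dsimp only; omega))

lemma compl_range_chainCell {n : ℕ} (hn : 0 < n) :
    (range (chainCell n))ᶜ = {(0, ⟨0, hn⟩), (1, ⟨0, hn⟩)} := by
  ext ⟨r, j⟩
  fin_cases r <;> simp [range_chainCell, Fin.ext_iff]

namespace HasSupportAR

variable {n : ℕ}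

lemma bot_lt_top {f : Fin 2 × Fin n → Fin (2 * n)} (hf : HasSupportAR f) (k : ℕ) (hk0 : k ≠ 0)
    (hk : k < n) : f (0, ⟨k, hk⟩) < f (1, ⟨k, hk⟩) := by
  obtain ⟨j, rfl⟩ := Nat.exists_eq_succ_of_ne_zero hk0
  rcases (piece_mem_AR_iff f j hk).mp (hf j hk) with h | h
  · exact h.2.1
  · exact h.2.1.trans h.2.2

lemma isA {f : Fin 2 × Fin n → Fin (2 * n)} (hf : HasSupportAR f) (j : ℕ) (hj0 : j ≠ 0)
    (hj : j + 1 < n) :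
    f (0, ⟨j, by omega⟩) < f (0, ⟨j + 1, hj⟩) ∧ f (0, ⟨j + 1, hj⟩) < f (1, ⟨j + 1, hj⟩) ∧
      f (1, ⟨j + 1, hj⟩) < f (1, ⟨j, by omega⟩) := by
  refine ((piece_mem_AR_iff f j hj).mp (hf j hj)).resolve_right fun h => ?_
  exact (hf.bot_lt_top j hj0 (by omega)).not_gt (h.1.trans h.2.1)

lemma strictMono_comp_chainCell {f : Fin 2 × Fin n → Fin (2 * n)} (hf : HasSupportAR f) :
    StrictMono (f ∘ chainCell n) := by
  refine Fin.strictMono_of_lt_add_one fun i hi => ?_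
  simp only [comp_apply, chainCell]
  split_ifs with h₁ h₂ h₂
  · exact (hf.isA (i + 1) (by omega) h₂).1
  · exact (hf.bot_lt_top (i + 1) (by omega) h₁).trans_eq (by congr 3; omega)
  · omega
  · have h := (hf.isA (2 * n - 3 - i) (by omega) (by omega)).2.2
    exact (Eq.trans_lt (by congr 3; omega) h).trans_eq (by congr 3; omega)

lemma apply_mem_Icc_of_mem_range_chainCell {f : Fin 2 × Fin n → Fin (2 * n)}
    (hf : HasSupportAR f) (hn : 1 < n) {p : Fin 2 × Fin n} (hp : p ∈ range (chainCell n)) :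
    f p ∈ Icc (f (0, ⟨1, hn⟩)) (f (1, ⟨1, hn⟩)) := by
  obtain ⟨i, rfl⟩ := hp
  have hmono := hf.strictMono_comp_chainCell.monotone
  have hfirst : chainCell n ⟨0, by omega⟩ = (0, ⟨1, hn⟩) := by
    rw [chainCell, dif_pos hn]
  have hlast : chainCell n ⟨2 * n - 3, by omega⟩ = (1, ⟨1, hn⟩) := by
    rw [chainCell, dif_neg (by dsimp only; omega)]
    exact Prod.ext rfl (Fin.ext (by dsimp only; omega))
  rw [← hfirst, ← hlast]
  exact ⟨hmono (Fin.mk_le_mk.mpr (Nat.zero_le _)), hmono (Fin.mk_le_mk.mpr (by omega))⟩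

lemma firstColumn_cases {f : (Fin 2 × Fin n) ≃ Fin (2 * n)} (hf : HasSupportAR f) (hn : 1 < n) :
    (f (0, ⟨0, by omega⟩) = (0 : ℕ) ∧ f (1, ⟨0, by omega⟩) = 2 * n - 1) ∨
      (f (1, ⟨0, by omega⟩) = (0 : ℕ) ∧ 2 ≤ (f (0, ⟨0, by omega⟩) : ℕ) ∧
        (f (0, ⟨0, by omega⟩) : ℕ) < 2 * n - 1) := by
  have hcover : ∀ p, p = (0, ⟨0, by omega⟩) ∨ p = (1, ⟨0, by omega⟩) ∨
      f p ∈ Icc (f (0, ⟨1, hn⟩)) (f (1, ⟨1, hn⟩)) := by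
    intro p
    by_cases hp : p ∈ range (chainCell n)
    · exact Or.inr (Or.inr (hf.apply_mem_Icc_of_mem_range_chainCell hn hp))
    · rw [← mem_compl_iff, compl_range_chainCell (show 0 < n by omega)] at hp
      rcases hp with rfl | rfl
      exacts [Or.inl rfl, Or.inr (Or.inl rfl)]
  have hpiece := (piece_mem_AR_iff f 0 hn).mp (hf 0 hn)
  simp only [Nat.zero_add] at hpiece
  rcases hpiece with ⟨hb, hbt, ht⟩ | ⟨htb, hbb, hbt⟩
  · refine Or.inl ⟨f.val_eq_zero_of_forall_le fun p => ?_,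
      f.val_eq_sub_one_of_forall_ge fun p => ?_⟩
    · rcases hcover p with rfl | rfl | ⟨hp, -⟩
      exacts [le_rfl, (hb.trans (hbt.trans ht)).le, hb.le.trans hp]
    · rcases hcover p with rfl | rfl | ⟨-, hp⟩
      exacts [(hb.trans (hbt.trans ht)).le, le_rfl, hp.trans ht.le]
  · refine Or.inr ⟨f.val_eq_zero_of_forall_le fun p => ?_, ?_, ?_⟩
    · rcases hcover p with rfl | rfl | ⟨hp, -⟩
      exacts [(htb.trans hbb).le, le_rfl, htb.le.trans hp]
    · rw [Fin.lt_def] at htb hbb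
      omega
    · have := (f (1, ⟨1, hn⟩)).isLt
      rw [Fin.lt_def] at hbt
      omega

lemma eq_of_bottomLeft_eq {f g : (Fin 2 × Fin n) ≃ Fin (2 * n)} (hf : HasSupportAR f)
    (hg : HasSupportAR g) (hn : 1 < n) (h : f (0, ⟨0, by omega⟩) = g (0, ⟨0, by omega⟩)) :
    f = g := by
  have h' : f (1, ⟨0, by omega⟩) = g (1, ⟨0, by omega⟩) := by
    rw [Fin.ext_iff] at h ⊢
    rcases hf.firstColumn_cases hn with hf' | hf' <;>
      rcases hg.firstColumn_cases hn with hg' | hg' <;> omega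
  refine Equiv.eq_of_eqOn_compl_range hf.strictMono_comp_chainCell
    hg.strictMono_comp_chainCell ?_
  rw [compl_range_chainCell (show 0 < n by omega)]
  rintro p (rfl | rfl)
  exacts [h, h']

end HasSupportAR

noncomputable def puzzleOfVal {n : ℕ} (v : Fin 2 × Fin n → ℕ) (hv : ∀ p, v p < 2 * n)
    (hinj : Injective v) : (Fin 2 × Fin n) ≃ Fin (2 * n) :=
  Equiv.ofBijective (fun p => ⟨v p, hv p⟩) <|
    (Fintype.bijective_iff_injective_and_card _).mpr
      ⟨fun _ _ h => hinj (Fin.val_eq_of_eq h), by simp⟩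

@[simp]
lemma puzzleOfVal_apply_val {n : ℕ} (v : Fin 2 × Fin n → ℕ) (hv : ∀ p, v p < 2 * n)
    (hinj : Injective v) (p : Fin 2 × Fin n) : (puzzleOfVal v hv hinj p : ℕ) = v p :=
  rfl

lemma hasSupportAR_iff_val {n : ℕ} (f : Fin 2 × Fin n → Fin (2 * n)) :
    HasSupportAR f ↔ ∀ j (hj : j + 1 < n),
      ((f (0, ⟨j, by omega⟩) : ℕ) < f (0, ⟨j + 1, hj⟩) ∧
          (f (0, ⟨j + 1, hj⟩) : ℕ) < f (1, ⟨j + 1, hj⟩) ∧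
          (f (1, ⟨j + 1, hj⟩) : ℕ) < f (1, ⟨j, by omega⟩)) ∨
        ((f (1, ⟨j, by omega⟩) : ℕ) < f (0, ⟨j + 1, hj⟩) ∧
          (f (0, ⟨j + 1, hj⟩) : ℕ) < f (0, ⟨j, by omega⟩) ∧
          (f (0, ⟨j, by omega⟩) : ℕ) < f (1, ⟨j + 1, hj⟩)) := by
  simp only [HasSupportAR, piece_mem_AR_iff, Fin.lt_def]

section Construction

variable (n : ℕ)

/-- The all-`A` puzzle: the boundary, read counterclockwise from the bottom-left corner, carries
`0, 1, …, 2n - 1`. -/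
def valA (p : Fin 2 × Fin n) : ℕ := if p.1 = 0 then p.2 else 2 * n - 1 - p.2

/-- The puzzle with first piece `R` and bottom-left entry `m`: the top-left entry is `0`, and the
cells `chainCell n i` carry `1, …, 2n - 1` in increasing order, skipping `m`. -/
def valR (m : ℕ) (p : Fin 2 × Fin n) : ℕ :=
  if p.2.val = 0 then (if p.1 = 0 then m else 0)
  else if p.1 = 0 then (if p.2.val < m then p.2 else p.2 + 1)
  else (if 2 * n - 1 - p.2 < m then 2 * n - 1 - p.2 else 2 * n - p.2)

lemma valA_lt (p : Fin 2 × Fin n) : valA n p < 2 * n := by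
  have := p.2.isLt
  unfold valA
  split_ifs <;> omega

lemma valA_injective : Injective (valA n) := by
  rintro ⟨r, j⟩ ⟨r', j'⟩ h
  have := r.isLt; have := r'.isLt; have := j.isLt; have := j'.isLt
  simp only [valA, Prod.mk.injEq, Fin.ext_iff, Fin.val_zero] at h ⊢
  split_ifs at h <;> omega

lemma hasSupportAR_valA :
    HasSupportAR (puzzleOfVal (valA n) (valA_lt n) (valA_injective n)) := by
  rw [hasSupportAR_iff_val]
  intro j hj
  simp only [puzzleOfVal_apply_val, valA, one_ne_zero, ↓reduceIte]
  omega

variable {n} {m : ℕ}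

lemma valR_lt (hm : m < 2 * n) (p : Fin 2 × Fin n) : valR n m p < 2 * n := by
  have := p.2.isLt
  unfold valR
  split_ifs <;> omega

lemma valR_injective (hm : m ≠ 0) : Injective (valR n m) := by
  rintro ⟨r, j⟩ ⟨r', j'⟩ h
  have := r.isLt; have := r'.isLt; have := j.isLt; have := j'.isLt
  simp only [valR, Prod.mk.injEq, Fin.ext_iff, Fin.val_zero] at h ⊢
  split_ifs at h <;> omega

lemma hasSupportAR_valR (hm : 2 ≤ m) (hmn : m < 2 * n - 1) :
    HasSupportAR (puzzleOfVal (valR n m) (valR_lt (by omega)) (valR_injective (by omega))) := by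
  rw [hasSupportAR_iff_val]
  intro j hj
  simp only [puzzleOfVal_apply_val, valR, one_ne_zero, Nat.add_one_ne_zero, ↓reduceIte]
  split_ifs <;> omega

end Construction

lemma range_bottomLeft {n : ℕ} (hn : 1 < n) :
    range (fun f : {f : (Fin 2 × Fin n) ≃ Fin (2 * n) // HasSupportAR f} =>
      f.1 (0, ⟨0, by omega⟩)) = {⟨1, by omega⟩, ⟨2 * n - 1, by omega⟩}ᶜ := by
  ext m
  simp only [mem_range, Subtype.exists, mem_compl_iff, mem_insert_iff, mem_singleton_iff,
    Fin.ext_iff, not_or]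
  constructor
  · rintro ⟨f, hf, hm⟩
    rcases hf.firstColumn_cases hn with h | h <;> omega
  · rintro ⟨hm1, hm⟩
    rcases Nat.eq_zero_or_pos m with hm0 | hm0
    · exact ⟨_, hasSupportAR_valA n, by simp [valA, hm0]⟩
    · exact ⟨_, hasSupportAR_valR (m := m) (by omega) (by omega), by simp [valR]⟩

theorem stmt9 (n : ℕ) (hn : 2 ≤ n) :
    puzzleCount n {(1, 2, 3, 4), (3, 2, 4, 1)} = 2 * (n - 1) := by
  have hinj : Injective fun f : {f : (Fin 2 × Fin n) ≃ Fin (2 * n) // HasSupportAR f} =>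
      f.1 (0, ⟨0, by omega⟩) :=
    fun f g h => Subtype.ext (f.2.eq_of_bottomLeft_eq g.2 hn h)
  change Nat.card {f : (Fin 2 × Fin n) ≃ Fin (2 * n) // HasSupportAR f} = _
  rw [← Set.ncard_range_of_injective hinj, range_bottomLeft hn, Set.ncard_compl,
    Set.ncard_pair (by simp [Fin.ext_iff]; omega), Nat.card_fin]
  omega
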